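/- arXiv:2503.13328 — 11 statements merged into one kernel-verified Lean document; each statement's English description precedes it below -/
import Mathlib

section
/- If f and g are convex functions on ℝ (and g − f admits a convex hull), then the function G = g − (g − f)^c is convex. -/
/-- `G` is the convex hull (largest convex minorant) of `f` on `ℝ`. -/
def IsCvxHull (f G : ℝ → ℝ) : Prop :=
  ConvexOn ℝ Set.univ G ∧ (∀ x, G x ≤ f x) ∧
    ∀ H : ℝ → ℝ, ConvexOn ℝ Set.univ H → (∀ x, H x ≤ f x) → ∀ x, H x ≤ G x

lemma combo_ineq {c : ℝ → ℝ} (hcc : ConvexOn ℝ Set.univ c) (p q u v : ℝ)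
    (hp : 0 ≤ p) (hq : 0 ≤ q) (hpq : p + q = 1) :
    c (p * u + q * v) ≤ p * c u + q * c v := by
  simpa using hcc.2 (Set.mem_univ u) (Set.mem_univ v) hp hq hpq

/-- A real convex function on ℝ has a supporting line at every point. -/
lemma exists_support_line (g : ℝ → ℝ) (hg : ConvexOn ℝ Set.univ g) (x0 : ℝ) :
    ∃ k : ℝ, ∀ z, g x0 + k * (z - x0) ≤ g z := by
  set S : Set ℝ := (fun z => (g x0 - g z) / (x0 - z)) '' Set.Iio x0 with hS
  have hne : S.Nonempty := ⟨_, ⟨x0 - 1, by simp, rfl⟩⟩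
  have hub : ∀ r ∈ S, r ≤ (g (x0 + 1) - g x0) / 1 := by
    rintro r ⟨z, hz, rfl⟩
    have hz' : z < x0 := hz
    have h := hg.slope_mono_adjacent (Set.mem_univ z) (Set.mem_univ (x0 + 1))
      hz' (by linarith)
    have h2 : x0 + 1 - x0 = 1 := by ring
    rw [h2, div_one] at h
    show (g x0 - g z) / (x0 - z) ≤ (g (x0 + 1) - g x0) / 1
    rw [div_one]
    exact h
  have hbdd : BddAbove S := ⟨_, hub⟩
  refine ⟨sSup S, fun z => ?_⟩
  rcases lt_trichotomy z x0 with h | h | h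
  · have hmem : (g x0 - g z) / (x0 - z) ∈ S := ⟨z, h, rfl⟩
    have hle : (g x0 - g z) / (x0 - z) ≤ sSup S := le_csSup hbdd hmem
    rw [div_le_iff₀ (by linarith)] at hle
    nlinarith [hle]
  · simp [h]
  · have hub2 : ∀ r ∈ S, r ≤ (g z - g x0) / (z - x0) := by
      rintro r ⟨w, hw, rfl⟩
      have hw' : w < x0 := hw
      have h3 := hg.slope_mono_adjacent (Set.mem_univ w) (Set.mem_univ z) hw' h
      show (g x0 - g w) / (x0 - w) ≤ (g z - g x0) / (z - x0)
      exact h3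
    have hle : sSup S ≤ (g z - g x0) / (z - x0) := csSup_le hne hub2
    rw [le_div_iff₀ (by linarith)] at hle
    nlinarith [hle]

set_option maxHeartbeats 2000000 in
lemma key_step (f g c : ℝ → ℝ)
    (hf : ConvexOn ℝ Set.univ f) (hg : ConvexOn ℝ Set.univ g)
    (hc : IsCvxHull (fun x => g x - f x) c)
    {x y s t : ℝ} (hxy : x < y) (hs : 0 < s) (ht : 0 < t) (hst : s + t = 1) :
    g (s * x + t * y) - c (s * x + t * y) ≤ s * (g x - c x) + t * (g y - c y) := by
  obtain ⟨hcc, hcu, hmax⟩ := hc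
  have hcu' : ∀ z, c z ≤ g z - f z := hcu
  set x0 := s * x + t * y with hx0
  have hxx0 : x < x0 := by
    have h1 : x0 - x = t * (y - x) := by rw [hx0]; linear_combination x * hst
    nlinarith [mul_pos ht (sub_pos.mpr hxy)]
  have hx0y : x0 < y := by
    have h1 : y - x0 = s * (y - x) := by rw [hx0]; linear_combination (-y) * hst
    nlinarith [mul_pos hs (sub_pos.mpr hxy)]
  obtain ⟨k, hk⟩ := exists_support_line g hg x0
  set A : ℝ := c x - g x + g x0 + k * (x - x0) with hA
  set B : ℝ := c y - g y + g x0 + k * (y - x0) with hB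
  set m : ℝ → ℝ := fun z => ((y - z) * A + (z - x) * B) / (y - x) with hm
  have hyx : (0:ℝ) < y - x := by linarith
  have hne : y - x ≠ 0 := ne_of_gt hyx
  have hmx : m x = A := by simp only [hm]; rw [div_eq_iff hne]; ring
  have hmy : m y = B := by simp only [hm]; rw [div_eq_iff hne]; ring
  have hAc : A ≤ c x := by rw [hA]; linarith [hk x]
  have hBc : B ≤ c y := by rw [hB]; linarith [hk y]
  have hmaff : ∀ p q u v : ℝ, p + q = 1 → m (p * u + q * v) = p * m u + q * m v := by
    intro p q u v hpq
    have hq1 : q = 1 - p := by linarith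
    subst hq1
    simp only [hm]
    field_simp
    ring
  clear_value x0 A B m
  have hmconv : ConvexOn ℝ Set.univ m := by
    refine ⟨convex_univ, fun u _ v _ p q hp hq hpq => ?_⟩
    simp only [smul_eq_mul]
    rw [hmaff p q u v hpq]
  have Hconv : ConvexOn ℝ Set.univ (fun z => max (c z) (m z)) := by
    refine ⟨convex_univ, fun u _ v _ p q hp hq hpq => ?_⟩
    simp only [smul_eq_mul]
    apply max_le
    · calc c (p * u + q * v) ≤ p * c u + q * c v := combo_ineq hcc p q u v hp hq hpq
        _ ≤ p * max (c u) (m u) + q * max (c v) (m v) := by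
            gcongr <;> [exact le_max_left _ _; exact le_max_left _ _]
    · calc m (p * u + q * v) ≤ p * m u + q * m v := le_of_eq (hmaff p q u v hpq)
        _ ≤ p * max (c u) (m u) + q * max (c v) (m v) := by
            gcongr <;> [exact le_max_right _ _; exact le_max_right _ _]
  have hkey : m x0 ≤ c x0 := by
    by_contra hcon'
    push_neg at hcon'
    have hcon : c x0 < m x0 := hcon'
    have Hle : ∀ z, max (c z) (m z) ≤ g z - f z := by
      intro z
      apply max_le (hcu' z)
      rcases lt_trichotomy z x with h | h | h
      · -- z < x : show m z ≤ c z using the contradiction hypothesis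
        have hd : (0:ℝ) < x0 - z := by linarith
        have hγ : 0 < (x0 - x) / (x0 - z) := by apply div_pos <;> linarith
        have hδ : 0 ≤ (x - z) / (x0 - z) := by apply div_nonneg <;> linarith
        have hγδ : (x0 - x) / (x0 - z) + (x - z) / (x0 - z) = 1 := by
          rw [← add_div, div_eq_one_iff_eq (ne_of_gt hd)]; ring
        have hcomb : (x0 - x) / (x0 - z) * z + (x - z) / (x0 - z) * x0 = x := by
          field_simp
          ring
        have hcx2 := combo_ineq hcc ((x0 - x) / (x0 - z)) ((x - z) / (x0 - z)) z x0
          (le_of_lt hγ) hδ hγδ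
        rw [hcomb] at hcx2
        have hmix := hmaff ((x0 - x) / (x0 - z)) ((x - z) / (x0 - z)) z x0 hγδ
        rw [hcomb] at hmix
        have hmxA : m x ≤ c x := by rw [hmx]; exact hAc
        have hprod : 0 ≤ (x - z) / (x0 - z) * (m x0 - c x0) :=
          mul_nonneg hδ (by linarith)
        have hmzcz : m z ≤ c z := by nlinarith [hcx2, hmix, hmxA, hγ, hprod]
        linarith [hcu' z]
      · rw [h, hmx]; linarith [hAc, hcu' x]
      · rcases lt_trichotomy z y with h2 | h2 | h2
        · -- x < z < y
          have hp0 : 0 ≤ (y - z) / (y - x) := by apply div_nonneg <;> linarith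
          have hq0 : 0 ≤ (z - x) / (y - x) := by apply div_nonneg <;> linarith
          have hpq : (y - z) / (y - x) + (z - x) / (y - x) = 1 := by
            rw [← add_div, div_eq_one_iff_eq hne]; ring
          have hzc : (y - z) / (y - x) * x + (z - x) / (y - x) * y = z := by
            field_simp
            ring
          have hfz := combo_ineq hf ((y - z) / (y - x)) ((z - x) / (y - x)) x y hp0 hq0 hpq
          rw [hzc] at hfz
          have hmz := hmaff ((y - z) / (y - x)) ((z - x) / (y - x)) x y hpq
          rw [hzc] at hmz
          rw [hmz, hmx, hmy, hA, hB]
          have hlamz : (y - z) / (y - x) * (g x0 + k * (x - x0))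
              + (z - x) / (y - x) * (g x0 + k * (y - x0)) = g x0 + k * (z - x0) := by
            field_simp
            ring
          have h1 : (y - z) / (y - x) * (c x) ≤ (y - z) / (y - x) * (g x - f x) :=
            mul_le_mul_of_nonneg_left (hcu' x) hp0
          have h2 : (z - x) / (y - x) * (c y) ≤ (z - x) / (y - x) * (g y - f y) :=
            mul_le_mul_of_nonneg_left (hcu' y) hq0
          nlinarith [hfz, hlamz, hk z, h1, h2]
        · rw [h2, hmy]; linarith [hBc, hcu' y]
        · -- y < z : show m z ≤ c z
          have hd : (0:ℝ) < z - x0 := by linarith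
          have ha : 0 ≤ (z - y) / (z - x0) := by apply div_nonneg <;> linarith
          have hb : 0 < (y - x0) / (z - x0) := by apply div_pos <;> linarith
          have hab : (z - y) / (z - x0) + (y - x0) / (z - x0) = 1 := by
            rw [← add_div, div_eq_one_iff_eq (ne_of_gt hd)]; ring
          have hcomb : (z - y) / (z - x0) * x0 + (y - x0) / (z - x0) * z = y := by
            field_simp
            ring
          have hcy2 := combo_ineq hcc ((z - y) / (z - x0)) ((y - x0) / (z - x0)) x0 z
            ha (le_of_lt hb) hab
          rw [hcomb] at hcy2
          have hmix := hmaff ((z - y) / (z - x0)) ((y - x0) / (z - x0)) x0 z hab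
          rw [hcomb] at hmix
          have hmyB : m y ≤ c y := by rw [hmy]; exact hBc
          have hprod : 0 ≤ (z - y) / (z - x0) * (m x0 - c x0) :=
            mul_nonneg ha (by linarith)
          have hmzcz : m z ≤ c z := by nlinarith [hcy2, hmix, hmyB, hb, hprod]
          linarith [hcu' z]
    have hfin := hmax (fun z => max (c z) (m z)) Hconv Hle x0
    have := le_max_right (c x0) (m x0)
    linarith
  -- final arithmetic
  have hmx0 : m x0 = s * A + t * B := by
    rw [hx0, hmaff s t x y hst, hmx, hmy]
  rw [hmx0, hA, hB] at hkey
  have hzero : s * (k * (x - x0)) + t * (k * (y - x0)) = 0 := by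
    rw [hx0]; linear_combination (-(k * (s * x + t * y))) * hst
  have hgx0 : s * g x0 + t * g x0 = g x0 := by linear_combination (g x0) * hst
  nlinarith [hkey, hzero, hgx0]

theorem convexOn_sub_convexHull (f g c : ℝ → ℝ)
    (hf : ConvexOn ℝ Set.univ f) (hg : ConvexOn ℝ Set.univ g)
    (hc : IsCvxHull (fun x => g x - f x) c) :
    ConvexOn ℝ Set.univ (fun x => g x - c x) := by
  refine ⟨convex_univ, fun x _ y _ s t hs ht hst => ?_⟩
  simp only [smul_eq_mul]
  rcases eq_or_lt_of_le hs with hs0 | hs0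
  · rw [← hs0] at hst ⊢; simp at hst; simp [hst]
  rcases eq_or_lt_of_le ht with ht0 | ht0
  · rw [← ht0] at hst ⊢; simp at hst; simp [hst]
  rcases lt_trichotomy x y with hxy | hxy | hxy
  · exact key_step f g c hf hg hc hxy hs0 ht0 hst
  · subst hxy
    have h1 : s * x + t * x = x := by linear_combination x * hst
    have h2 : s * (g x - c x) + t * (g x - c x) = g x - c x := by
      linear_combination (g x - c x) * hst
    rw [h1, h2]
  · have hkey := key_step f g c hf hg hc hxy ht0 hs0 (by linarith)
    have hcomm : t * y + s * x = s * x + t * y := by ring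
    rw [hcomm] at hkey
    linarith
end

section
/- If g : ℝ → ℝ is convex and h : ℝ → ℝ is measurable (admitting convex hulls where needed), then (h − g)^c = (h^c − g)^c. -/
theorem convexHull_sub_convex_eq (g h hC A B : ℝ → ℝ)
    (hg : ConvexOn ℝ Set.univ g) (hmeas : Measurable h)
    (hhC : IsCvxHull h hC)
    (hA : IsCvxHull (fun x => h x - g x) A)
    (hB : IsCvxHull (fun x => hC x - g x) B) :
    A = B := by
  funext x
  apply le_antisymm
  · -- A ≤ B : A + g is a convex minorant of h, hence ≤ hC, so A ≤ hC - g
    have hAg : ConvexOn ℝ Set.univ (fun y => A y + g y) := hA.1.add hg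
    have hle : ∀ y, A y + g y ≤ h y := fun y => by
      have : A y ≤ h y - g y := hA.2.1 y; linarith
    have h1 : ∀ y, A y + g y ≤ hC y := hhC.2.2 _ hAg hle
    exact hB.2.2 A hA.1 (fun y => by show A y ≤ hC y - g y; have := h1 y; linarith) x
  · -- B ≤ A : B ≤ hC - g ≤ h - g
    exact hA.2.2 B hB.1 (fun y => by show B y ≤ h y - g y; have h2 : B y ≤ hC y - g y := hB.2.1 y; have := hhC.2.1 y; linarith) x
end

section
/- Let ψ : ℝ → ℝ be convex with ψ ≥ b pointwise, where b : ℝ → ℝ. Define φ = (a − ψ)⁺, θ₁ = −ψ′ (right derivative of ψ), θ₂ = 0. Then for all x, y ∈ ℝ: a(x) ≤ φ(x) + ψ(y) + θ₁(x)(y − x) and b(y) ≤ φ(x) + ψ(y) + θ₂(x)(y − x). That is, (φ, ψ, θ₁, θ₂) is a superhedge for the Bermudan option with payoffs (a, b). -/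
open Set

lemma convex_right_deriv_subgradient {ψ : ℝ → ℝ} (hψ : ConvexOn ℝ Set.univ ψ)
    (x y : ℝ) : ψ x + derivWithin ψ (Set.Ici x) x * (y - x) ≤ ψ y := by
  set S : ℝ → ℝ := slope ψ x with hS
  have hmono : MonotoneOn S (Ioi x) := by
    intro u hu v hv huv
    simp only [hS, slope_def_field]
    exact hψ.secant_mono trivial trivial trivial (ne_of_gt hu) (ne_of_gt hv) huv
  have hlb : ∀ z ∈ Iio x, ∀ u ∈ Ioi x, S z ≤ S u := by
    intro z hz u hu
    simp only [hS, slope_def_field]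
    exact hψ.secant_mono trivial trivial trivial (ne_of_lt hz) (ne_of_gt hu)
      (le_of_lt (lt_trans hz hu))
  have hbdd : BddBelow (S '' Ioi x) := by
    refine ⟨S (x - 1), ?_⟩
    rintro _ ⟨u, hu, rfl⟩
    exact hlb _ (by simp : x - 1 ∈ Iio x) u hu
  set d : ℝ := sInf (S '' Ioi x) with hd
  have htend : Filter.Tendsto S (nhdsWithin x (Ioi x)) (nhds d) :=
    hmono.tendsto_nhdsGT hbdd
  have hderiv : HasDerivWithinAt ψ d (Ioi x) x := by
    rw [hasDerivWithinAt_iff_tendsto_slope' (by simp : x ∉ Ioi x)]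
    exact htend
  have hderiv' : HasDerivWithinAt ψ d (Ici x) x := hderiv.Ici_of_Ioi
  have heq : derivWithin ψ (Set.Ici x) x = d :=
    hderiv'.derivWithin (uniqueDiffOn_Ici x x self_mem_Ici)
  rw [heq]
  rcases lt_trichotomy y x with hyx | rfl | hxy
  · have h1 : S y ≤ d := by
      refine le_csInf (by exact ⟨S (x + 1), x + 1, by simp, rfl⟩) ?_
      rintro _ ⟨u, hu, rfl⟩
      exact hlb y hyx u hu
    have h2 : S y = (ψ y - ψ x) / (y - x) := slope_def_field ψ x y
    have hne : y - x < 0 := by linarith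
    have : d * (y - x) ≤ S y * (y - x) := by
      exact mul_le_mul_of_nonpos_right h1 (le_of_lt hne)
    rw [h2] at this
    rw [div_mul_cancel₀ _ (ne_of_lt hne)] at this
    linarith
  · simp
  · have h1 : d ≤ S y := csInf_le hbdd ⟨y, hxy, rfl⟩
    have h2 : S y = (ψ y - ψ x) / (y - x) := slope_def_field ψ x y
    have hne : (0:ℝ) < y - x := by linarith
    have : d * (y - x) ≤ S y * (y - x) := mul_le_mul_of_nonneg_right h1 (le_of_lt hne)
    rw [h2, div_mul_cancel₀ _ (ne_of_gt hne)] at this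
    linarith

/-- `(φ, ψ, θ₁, θ₂)` is a superhedge for the Bermudan option with payoffs `(a, b)`. -/
def IsSuperhedge (a b φ ψ θ₁ θ₂ : ℝ → ℝ) : Prop :=
  ∀ x y : ℝ, a x ≤ φ x + ψ y + θ₁ x * (y - x) ∧ b y ≤ φ x + ψ y + θ₂ x * (y - x)

theorem superhedge_generated_by_psi (a b ψ : ℝ → ℝ)
    (ha0 : ∀ x, 0 ≤ a x) (hb0 : ∀ x, 0 ≤ b x)
    (hψconv : ConvexOn ℝ Set.univ ψ) (hψb : ∀ x, b x ≤ ψ x) :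
    IsSuperhedge a b (fun x => max (a x - ψ x) 0) ψ
      (fun x => -(derivWithin ψ (Set.Ici x) x)) (fun _ => 0) := by
  intro x y
  have hsub := convex_right_deriv_subgradient hψconv x y
  have hmax1 : a x - ψ x ≤ max (a x - ψ x) 0 := le_max_left _ _
  have hmax2 : (0:ℝ) ≤ max (a x - ψ x) 0 := le_max_right _ _
  constructor
  · simp only [neg_mul]
    nlinarith
  · have := hψb y
    simp only []
    nlinarith
end

section
/- Suppose b : ℝ → ℝ is convex and (φ, ψ, θ₁, θ₂) is a superhedge for payoffs (a, b), where ψ admits a convex hull ψ^c. Then (φ, ψ^c, θ₁, θ₂) is also a superhedge for (a, b). -/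
theorem superhedge_convexHull (a b φ ψ ψc θ₁ θ₂ : ℝ → ℝ)
    (hb : ConvexOn ℝ Set.univ b)
    (hsh : IsSuperhedge a b φ ψ θ₁ θ₂)
    (hψc : IsCvxHull ψ ψc) :
    IsSuperhedge a b φ ψc θ₁ θ₂ := by
  obtain ⟨hcvx, hle, hmax⟩ := hψc
  have haff : ∀ m k : ℝ, ConvexOn ℝ Set.univ (fun y : ℝ => m * y + k) := by
    intro m k
    refine ⟨convex_univ, fun p _ q _ α β hα hβ hαβ => le_of_eq ?_⟩
    simp only [smul_eq_mul]
    linear_combination (-k) * hαβ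
  intro x y
  set F : ℝ → ℝ := (fun y => (-(θ₁ x)) * y + (a x - φ x + θ₁ x * x)) ⊔
      (fun y => b y + ((-(θ₂ x)) * y + (θ₂ x * x - φ x))) with hF
  have HF : ConvexOn ℝ Set.univ F := (haff _ _).sup (hb.add (haff _ _))
  have HFle : ∀ z, F z ≤ ψ z := by
    intro z
    obtain ⟨h1, h2⟩ := hsh x z
    simp only [hF, Pi.sup_apply, sup_le_iff]
    constructor <;> nlinarith
  have key := hmax F HF HFle y
  simp only [hF, Pi.sup_apply, sup_le_iff] at key
  constructor <;> nlinarith [key.1, key.2]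
end

section
/- Suppose b is convex and (φ, ψ, θ₁, θ₂) is a superhedge for payoffs (a, b). Then pointwise φ ≥ (a − ψ) and φ ≥ −(ψ − b)^c, i.e., φ ≥ (a − ψ) ∨ (−(ψ − b)^c). -/
theorem superhedge_phi_lower_bound (a b φ ψ θ₁ θ₂ h : ℝ → ℝ)
    (hb : ConvexOn ℝ Set.univ b)
    (hsh : IsSuperhedge a b φ ψ θ₁ θ₂)
    (hh : IsCvxHull (fun x => ψ x - b x) h) :
    ∀ x, a x - ψ x ≤ φ x ∧ -(h x) ≤ φ x := by
  intro x
  obtain ⟨h1, -⟩ := hsh x x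
  refine ⟨by linarith, ?_⟩
  have haff : ConvexOn ℝ Set.univ (fun y => -φ x - θ₂ x * (y - x)) := by
    refine ⟨convex_univ, fun p _ q _ α β hα hβ hs => le_of_eq ?_⟩
    simp only [smul_eq_mul]
    have : β = 1 - α := by linarith
    subst this; ring
  have hmin : ∀ y, -φ x - θ₂ x * (y - x) ≤ ψ y - b y := by
    intro y
    obtain ⟨-, h2⟩ := hsh x y
    linarith
  have := hh.2.2 _ haff hmin x
  simp at this
  linarith
end

section
/- Suppose b is convex, ψ is convex, and ψ ≥ b would not be assumed; set h = (ψ − b)^c (assumed to exist), φ̃ = (a − ψ) ∨ (−h), θ̃₁ = −ψ′, θ̃₂ = −h′. Then (φ̃, ψ, θ̃₁, θ̃₂) is a superhedge for payoffs (a, b): for all x, y ∈ ℝ, a(x) ≤ φ̃(x) + ψ(y) + θ̃₁(x)(y − x) and b(y) ≤ φ̃(x) + ψ(y) + θ̃₂(x)(y − x). -/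
open Set

/-- Supporting line at the right derivative of a convex function on `ℝ`. -/
lemma convex_support_line (f : ℝ → ℝ) (hf : ConvexOn ℝ Set.univ f) (x y : ℝ) :
    f x + derivWithin f (Set.Ici x) x * (y - x) ≤ f y := by
  have hmono := hf.slope_mono (mem_univ x)
  have hmono' : MonotoneOn (slope f x) (Ioi x) :=
    hmono.mono (fun z hz => ⟨mem_univ z, ne_of_gt hz⟩)
  set S : Set ℝ := slope f x '' Ioi x with hS
  have hbdd : BddBelow S := by
    refine ⟨slope f x (x - 1), ?_⟩
    rintro s ⟨z, hz, rfl⟩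
    exact hmono ⟨mem_univ _, by norm_num⟩ ⟨mem_univ z, ne_of_gt hz⟩ (by linarith [mem_Ioi.mp hz])
  have htend : Filter.Tendsto (slope f x) (nhdsWithin x (Ioi x)) (nhds (sInf S)) :=
    hmono'.tendsto_nhdsGT hbdd
  have hd : HasDerivWithinAt f (sInf S) (Ioi x) x :=
    (hasDerivWithinAt_iff_tendsto_slope' notMem_Ioi_self).2 htend
  have hd' : HasDerivWithinAt f (sInf S) (Ici x) x := hd.Ici_of_Ioi
  have hder : derivWithin f (Set.Ici x) x = sInf S :=
    hd'.derivWithin (uniqueDiffOn_Ici x x self_mem_Ici)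
  rw [hder]
  rcases lt_trichotomy x y with hxy | hxy | hxy
  · have h1 : sInf S ≤ slope f x y := csInf_le hbdd ⟨y, hxy, rfl⟩
    rw [slope_def_field] at h1
    have hyx : (0:ℝ) < y - x := by linarith
    nlinarith [(le_div_iff₀ hyx).mp h1]
  · simp [← hxy]
  · have h1 : slope f x y ≤ sInf S := by
      refine le_csInf ⟨slope f x (x + 1), ⟨x + 1, by norm_num, rfl⟩⟩ ?_
      rintro s ⟨z, hz, rfl⟩
      exact hmono ⟨mem_univ y, ne_of_lt hxy⟩ ⟨mem_univ z, ne_of_gt hz⟩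
        (by linarith [mem_Ioi.mp hz])
    rw [slope_def_field] at h1
    have hyx : y - x < 0 := by linarith
    nlinarith [(div_le_iff_of_neg hyx).mp h1]

theorem superhedge_with_better_phi (a b ψ h : ℝ → ℝ)
    (hb : ConvexOn ℝ Set.univ b) (hψ : ConvexOn ℝ Set.univ ψ)
    (hh : IsCvxHull (fun x => ψ x - b x) h) :
    IsSuperhedge a b (fun x => max (a x - ψ x) (-(h x))) ψ
      (fun x => -(derivWithin ψ (Set.Ici x) x))
      (fun x => -(derivWithin h (Set.Ici x) x)) := by
  intro x y
  refine ⟨?_, ?_⟩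
  · show a x ≤ max (a x - ψ x) (-(h x)) + ψ y + -(derivWithin ψ (Set.Ici x) x) * (y - x)
    have h1 := convex_support_line ψ hψ x y
    have h2 : a x - ψ x ≤ max (a x - ψ x) (-(h x)) := le_max_left _ _
    linarith
  · show b y ≤ max (a x - ψ x) (-(h x)) + ψ y + -(derivWithin h (Set.Ici x) x) * (y - x)
    have h1 := convex_support_line h hh.1 x y
    have h2 : h y ≤ ψ y - b y := hh.2.1 y
    have h3 : -(h x) ≤ max (a x - ψ x) (-(h x)) := le_max_right _ _
    linarith
end

section
/- Suppose b and ψ are convex with g := (ψ − b)^c existing, and define ψ̂ = ψ − g. Then ψ̂ ≥ b pointwise, ψ̂ is convex, and the convex hull of ψ̂ − b is identically zero. -/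
open Set

private lemma aff_cvx (α β : ℝ) : ConvexOn ℝ (univ : Set ℝ) (fun w : ℝ => α * w + β) := by
  refine ⟨convex_univ, ?_⟩
  intro x _ y _ a c ha hc hac
  simp only [smul_eq_mul]
  exact le_of_eq (by linear_combination (-β) * hac)

private lemma aff_ccv (α β : ℝ) : ConcaveOn ℝ (univ : Set ℝ) (fun w : ℝ => α * w + β) := by
  refine ⟨convex_univ, ?_⟩
  intro x _ y _ a c ha hc hac
  simp only [smul_eq_mul]
  exact le_of_eq (by linear_combination β * hac)

/-- A convex function lying below an affine function at the endpoints of an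
interval lies below it on the whole interval. -/
private lemma conv_le_aff {F : ℝ → ℝ} (hF : ConvexOn ℝ (univ : Set ℝ) F) (α β : ℝ)
    {u v w : ℝ} (hw : w ∈ Icc u v)
    (h1 : F u ≤ α * u + β) (h2 : F v ≤ α * v + β) : F w ≤ α * w + β := by
  have huv : u ≤ v := le_trans hw.1 hw.2
  have hG : ConvexOn ℝ (univ : Set ℝ) (F - fun w : ℝ => α * w + β) :=
    hF.sub (aff_ccv α β)
  have hseg : w ∈ segment ℝ u v := by rw [segment_eq_Icc huv]; exact hw
  have h3 := hG.le_on_segment (mem_univ u) (mem_univ v) hseg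
  simp only [Pi.sub_apply] at h3
  rcases max_cases (F u - (α * u + β)) (F v - (α * v + β)) with ⟨h4, _⟩ | ⟨h4, _⟩ <;>
    rw [h4] at h3 <;> linarith

/-- Gluing: if `φ` is convex and lies below the convex `g` at `x` and `y`, then the
function equal to `max g φ` on `[x,y]` and to `g` outside is convex. -/
private lemma glue_convex {g φ : ℝ → ℝ} (hgc : ConvexOn ℝ (univ : Set ℝ) g)
    (hφ : ConvexOn ℝ (univ : Set ℝ) φ) {x y : ℝ} (hx : φ x ≤ g x) (hy : φ y ≤ g y) :
    ConvexOn ℝ (univ : Set ℝ) (fun w => if w ∈ Icc x y then max (g w) (φ w) else g w) := by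
  set K := fun w => if w ∈ Icc x y then max (g w) (φ w) else g w with hK
  have hKg : ∀ w, g w ≤ K w := by
    intro w; by_cases h : w ∈ Icc x y
    · have hw : K w = max (g w) (φ w) := if_pos h
      rw [hw]; exact le_max_left _ _
    · have hw : K w = g w := if_neg h
      rw [hw]
  have key : ∀ u v s r : ℝ, u < v → 0 ≤ s → 0 ≤ r → s + r = 1 →
      K (s * u + r * v) ≤ s * K u + r * K v := by
    intro u v s r huv hs hr hsr
    have hvu : v - u ≠ 0 := sub_ne_zero.mpr huv.ne'
    set κ := (K v - K u) / (v - u) with hκdef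
    have hκ : κ * (v - u) = K v - K u := div_mul_cancel₀ _ hvu
    set m := s * u + r * v with hm
    have hrvu : 0 ≤ r * (v - u) := mul_nonneg hr (sub_nonneg.mpr huv.le)
    have hsvu : 0 ≤ s * (v - u) := mul_nonneg hs (sub_nonneg.mpr huv.le)
    have hmu : u ≤ m := by
      have h0 : m - u = r * (v - u) := by rw [hm]; linear_combination u * hsr
      linarith
    have hmv : m ≤ v := by
      have h0 : v - m = s * (v - u) := by rw [hm]; linear_combination (-v) * hsr
      linarith
    have hgc' : ∀ w ∈ Icc u v, g w ≤ κ * w + (K u - κ * u) := by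
      intro w hw
      refine conv_le_aff hgc κ (K u - κ * u) hw ?_ ?_
      · have := hKg u; linarith
      · have h2 : κ * v + (K u - κ * u) = K v := by linear_combination hκ
        have := hKg v; linarith
    have hcm : κ * m + (K u - κ * u) = s * K u + r * K v := by
      have hs' : s = 1 - r := by linarith
      rw [hm, hs']; linear_combination r * hκ
    have hKm : K m ≤ κ * m + (K u - κ * u) := by
      by_cases hmxy : m ∈ Icc x y
      · have h1 : g m ≤ κ * m + (K u - κ * u) := hgc' m ⟨hmu, hmv⟩
        have h2 : φ m ≤ κ * m + (K u - κ * u) := by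
          have hpm : max u x ≤ m := max_le hmu hmxy.1
          have hmq : m ≤ min v y := le_min hmv hmxy.2
          refine conv_le_aff hφ κ (K u - κ * u) ⟨hpm, hmq⟩ ?_ ?_
          · rcases le_total x u with h | h
            · rw [max_eq_left h]
              have hu_mem : u ∈ Icc x y := ⟨h, le_trans hmu hmxy.2⟩
              have hKu : K u = max (g u) (φ u) := if_pos hu_mem
              have : φ u ≤ K u := hKu ▸ le_max_right _ _
              linarith
            · rw [max_eq_right h]
              have hx_mem : x ∈ Icc u v := ⟨h, le_trans hmxy.1 hmv⟩
              have := hgc' x hx_mem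
              linarith
          · rcases le_total y v with h | h
            · rw [min_eq_right h]
              have hy_mem : y ∈ Icc u v := ⟨le_trans hmu hmxy.2, h⟩
              have := hgc' y hy_mem
              linarith
            · rw [min_eq_left h]
              have hv_mem : v ∈ Icc x y := ⟨le_trans hmxy.1 hmv, h⟩
              have hKv : K v = max (g v) (φ v) := if_pos hv_mem
              have hφv : φ v ≤ K v := hKv ▸ le_max_right _ _
              have h2 : κ * v + (K u - κ * u) = K v := by linear_combination hκ
              linarith
        have hKmval : K m = max (g m) (φ m) := if_pos hmxy
        rw [hKmval]; exact max_le h1 h2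
      · have hKmval : K m = g m := if_neg hmxy
        rw [hKmval]; exact hgc' m ⟨hmu, hmv⟩
    linarith
  refine ⟨convex_univ, ?_⟩
  intro u _ v _ s r hs hr hsr
  simp only [smul_eq_mul]
  rcases lt_trichotomy u v with h | h | h
  · exact key u v s r h hs hr hsr
  · subst h
    have h1 : s * u + r * u = u := by linear_combination u * hsr
    have h2 : s * K u + r * K u = K u := by linear_combination (K u) * hsr
    rw [h1, h2]
  · have hkey := key v u r s h hr hs (by linarith)
    have h1 : s * u + r * v = r * v + s * u := by ring
    rw [h1]; linarith

theorem psi_hat_properties (b ψ g : ℝ → ℝ)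
    (hb : ConvexOn ℝ Set.univ b) (hψ : ConvexOn ℝ Set.univ ψ)
    (hg : IsCvxHull (fun x => ψ x - b x) g) :
    (∀ x, b x ≤ ψ x - g x) ∧
    ConvexOn ℝ Set.univ (fun x => ψ x - g x) ∧
    IsCvxHull (fun x => (ψ x - g x) - b x) (fun _ => 0) := by
  obtain ⟨hgc, hgle, hgmax⟩ := hg
  have h1 : ∀ x, b x ≤ ψ x - g x := by intro x; have := hgle x; simp at this; linarith
  have key : ∀ x y : ℝ, x < y → ∀ a c : ℝ, 0 ≤ a → 0 ≤ c → a + c = 1 →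
      ψ (a * x + c * y) - g (a * x + c * y) ≤ a * (ψ x - g x) + c * (ψ y - g y) := by
    intro x y hxy a c ha hc hac
    have hyx : y - x ≠ 0 := sub_ne_zero.mpr hxy.ne'
    set α := (g y - g x - (ψ y - ψ x)) / (y - x) with hαdef
    have hα : α * (y - x) = g y - g x - (ψ y - ψ x) := div_mul_cancel₀ _ hyx
    set β := (g x - ψ x) - α * x with hβ
    -- φ w := ψ w + (α * w + β) is convex, equals g at x and y, and is ≤ ψ - b on [x,y]
    have hφc : ConvexOn ℝ (univ : Set ℝ) (fun w => ψ w + (α * w + β)) :=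
      hψ.add (aff_cvx α β)
    have hφx : ψ x + (α * x + β) = g x := by rw [hβ]; ring
    have hφy : ψ y + (α * y + β) = g y := by rw [hβ]; linear_combination hα
    have hble : ∀ w ∈ Icc x y, b w ≤ (-α) * w + (-β) := by
      intro w hw
      refine conv_le_aff hb (-α) (-β) hw ?_ ?_
      · have := h1 x; linarith [hφx]
      · have := h1 y; linarith [hφy]
    set K := fun w => if w ∈ Icc x y then max (g w) (ψ w + (α * w + β)) else g w with hK
    have hKc : ConvexOn ℝ (univ : Set ℝ) K :=
      glue_convex hgc hφc (le_of_eq hφx) (le_of_eq hφy)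
    have hKle : ∀ w, K w ≤ ψ w - b w := by
      intro w; by_cases h : w ∈ Icc x y
      · have hKw : K w = max (g w) (ψ w + (α * w + β)) := if_pos h
        rw [hKw]
        refine max_le ?_ ?_
        · have := hgle w; simpa using this
        · have := hble w h; linarith
      · have hKw : K w = g w := if_neg h
        rw [hKw]; have := hgle w; simpa using this
    have hz : a * x + c * y ∈ Icc x y := by
      have h0 : a * x + c * y - x = c * (y - x) := by linear_combination x * hac
      have h0' : y - (a * x + c * y) = a * (y - x) := by linear_combination (-y) * hac
      have hc0 : 0 ≤ c * (y - x) := mul_nonneg hc (sub_nonneg.mpr hxy.le)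
      have ha0 : 0 ≤ a * (y - x) := mul_nonneg ha (sub_nonneg.mpr hxy.le)
      constructor <;> linarith
    have hmax := hgmax K hKc hKle (a * x + c * y)
    have hφz : ψ (a * x + c * y) + (α * (a * x + c * y) + β) ≤ g (a * x + c * y) := by
      have hKz : K (a * x + c * y) = max (g (a * x + c * y))
          (ψ (a * x + c * y) + (α * (a * x + c * y) + β)) := if_pos hz
      rw [hKz] at hmax
      exact le_trans (le_max_right _ _) hmax
    have e : α * (a * x + c * y) + β = a * (g x - ψ x) + c * (g y - ψ y) := by
      rw [hβ]; linear_combination c * hα + (α * x - (g x - ψ x)) * hac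
    linarith
  have hconv : ConvexOn ℝ Set.univ (fun x => ψ x - g x) := by
    refine ⟨convex_univ, ?_⟩
    intro x _ y _ a c ha hc hac
    simp only [smul_eq_mul]
    rcases lt_trichotomy x y with h | h | h
    · exact key x y h a c ha hc hac
    · subst h
      have h1' : a * x + c * x = x := by linear_combination x * hac
      rw [h1']
      have : a * (ψ x - g x) + c * (ψ x - g x) = ψ x - g x := by
        linear_combination (ψ x - g x) * hac
      linarith
    · have hkey := key y x h c a hc ha (by linarith)
      have h1' : a * x + c * y = c * y + a * x := by ring
      rw [h1']; linarith
  refine ⟨h1, hconv, ?_⟩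
  refine ⟨convexOn_const 0 convex_univ, ?_, ?_⟩
  · intro x; have := hgle x; simp at this ⊢; linarith
  · intro H Hcvx Hle x
    have hHg : ConvexOn ℝ (univ : Set ℝ) (fun w => H w + g w) := Hcvx.add hgc
    have hHgle : ∀ w, H w + g w ≤ ψ w - b w := by
      intro w
      have h : H w ≤ ψ w - g w - b w := Hle w
      linarith
    have h2 : H x + g x ≤ g x := hgmax _ hHg hHgle x
    show H x ≤ (0 : ℝ)
    linarith
end

section
/- Let μ, ν be probability measures on ℝ in convex order (μ ≤_cx ν), let b, ψ be convex with g := (ψ − b)^c integrable against μ and ν, and set ψ̂ = ψ − g, φ = (a − ψ) ∨ (−g). Then ∫ (a − ψ̂)⁺ dμ + ∫ ψ̂ dν ≤ ∫ φ dμ + ∫ ψ dν. -/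
open MeasureTheory

/-- `μ ≤_cx ν`: convex order of measures on ℝ. -/
def ConvexOrder (μ ν : Measure ℝ) : Prop :=
  ∀ f : ℝ → ℝ, ConvexOn ℝ Set.univ f → Integrable f μ → Integrable f ν →
    (∫ x, f x ∂μ) ≤ ∫ x, f x ∂ν

theorem cost_of_psi_hat_le (μ ν : Measure ℝ)
    [IsProbabilityMeasure μ] [IsProbabilityMeasure ν]
    (hcx : ConvexOrder μ ν) (a b ψ g : ℝ → ℝ)
    (hb : ConvexOn ℝ Set.univ b) (hψ : ConvexOn ℝ Set.univ ψ)
    (hg : IsCvxHull (fun x => ψ x - b x) g)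
    (hgμ : Integrable g μ) (hgν : Integrable g ν)
    (hint1 : Integrable (fun x => max (a x - (ψ x - g x)) 0) μ)
    (hint2 : Integrable (fun x => ψ x - g x) ν)
    (hint3 : Integrable (fun x => max (a x - ψ x) (-(g x))) μ)
    (hint4 : Integrable ψ ν) :
    (∫ x, max (a x - (ψ x - g x)) 0 ∂μ) + (∫ x, (ψ x - g x) ∂ν)
      ≤ (∫ x, max (a x - ψ x) (-(g x)) ∂μ) + ∫ x, ψ x ∂ν := by
  have key : ∀ x, max (a x - (ψ x - g x)) 0 = max (a x - ψ x) (-(g x)) + g x := by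
    intro x
    rcases le_total (a x - ψ x) (-(g x)) with h | h
    · rw [max_eq_right h, max_eq_right (by linarith)]; ring
    · rw [max_eq_left h, max_eq_left (by linarith)]; ring
  have h1 : (∫ x, max (a x - (ψ x - g x)) 0 ∂μ)
      = (∫ x, max (a x - ψ x) (-(g x)) ∂μ) + ∫ x, g x ∂μ := by
    rw [← integral_add hint3 hgμ]
    exact integral_congr_ae (Filter.Eventually.of_forall key)
  have h2 : (∫ x, (ψ x - g x) ∂ν) = (∫ x, ψ x ∂ν) - ∫ x, g x ∂ν :=
    integral_sub hint4 hgν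
  have h3 : (∫ x, g x ∂μ) ≤ ∫ x, g x ∂ν := hcx g hg.1 hgμ hgν
  linarith
end

section
/- Under the setting of Case (C3) (symmetric densities under the dispersion assumption; a, b convex, symmetric about 0, a ≥ b ≥ 0, with l(0) < a(0) and b(e) < a(e)), define Λ(x) = b(g^R(x)) − a(x) on [x₀, e). Then Λ is continuous and decreasing, Λ(x₀) > 0, and lim_{x→e} Λ(x) < 0, so there exists x₂ ∈ (x₀, e) with Λ(x₂) = 0, i.e., a point where the chord line through (x₂, a(x₂)) and (g^R(x₂), b(g^R(x₂))) is horizontal. -/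
open Set Filter

lemma conv_sym_mono {f : ℝ → ℝ} (hf : ConvexOn ℝ Set.univ f) (hs : ∀ x, f (-x) = f x) :
    MonotoneOn f (Set.Ici 0) := by
  intro x hx y hy hxy
  simp only [Set.mem_Ici] at hx hy
  rcases eq_or_lt_of_le hy with h0 | h0
  · have hx0 : x = 0 := le_antisymm (hxy.trans h0.symm.le) hx
    rw [hx0, ← h0]
  · have ht : (0:ℝ) ≤ (y - x)/(2*y) := div_nonneg (by linarith) (by linarith)
    have hu : (0:ℝ) ≤ (x + y)/(2*y) := div_nonneg (by linarith) (by linarith)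
    have hsum : (y - x)/(2*y) + (x + y)/(2*y) = 1 := by
      field_simp
      ring
    have key := hf.2 (Set.mem_univ (-y)) (Set.mem_univ y) ht hu hsum
    have hcomb : ((y - x)/(2*y)) • (-y) + ((x + y)/(2*y)) • y = x := by
      simp only [smul_eq_mul]
      field_simp
      ring
    rw [hcomb] at key
    calc f x ≤ (y - x)/(2*y) * f (-y) + (x + y)/(2*y) * f y := key
      _ = ((y - x)/(2*y) + (x + y)/(2*y)) * f y := by rw [hs y]; ring
      _ = f y := by rw [hsum, one_mul]

lemma conv_continuous {f : ℝ → ℝ} (hf : ConvexOn ℝ Set.univ f) : Continuous f := by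
  exact continuousOn_univ.1 (hf.continuousOn isOpen_univ)

theorem exists_horizontal_chord (e x₀ : ℝ) (hx₀ : 0 < x₀) (hx₀e : x₀ < e)
    (a b : ℝ → ℝ)
    (haconv : ConvexOn ℝ Set.univ a) (hbconv : ConvexOn ℝ Set.univ b)
    (hasym : ∀ x, a (-x) = a x) (hbsym : ∀ x, b (-x) = b x)
    (hab : ∀ x, b x ≤ a x) (hb0 : ∀ x, 0 ≤ b x)
    (gR : ℝ → ℝ)
    (hgc : ContinuousOn gR (Set.Ico x₀ e))
    (hganti : StrictAntiOn gR (Set.Ico x₀ e))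
    (hgid : ∀ x ∈ Set.Ico x₀ e, x < gR x)
    (hglim : Tendsto gR (nhdsWithin e (Set.Iio e)) (nhds e))
    (hbe : b e < a e)
    (hl0 : a x₀ + ((b (gR x₀) - a x₀) / (gR x₀ - x₀)) * (0 - x₀) < a 0) :
    ContinuousOn (fun x => b (gR x) - a x) (Set.Ico x₀ e) ∧
    AntitoneOn (fun x => b (gR x) - a x) (Set.Ico x₀ e) ∧
    0 < b (gR x₀) - a x₀ ∧
    Tendsto (fun x => b (gR x) - a x) (nhdsWithin e (Set.Iio e)) (nhds (b e - a e)) ∧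
    b e - a e < 0 ∧
    ∃ x₂ ∈ Set.Ioo x₀ e, b (gR x₂) - a x₂ = 0 := by
  have hacont : Continuous a := conv_continuous haconv
  have hbcont : Continuous b := conv_continuous hbconv
  have hamono : MonotoneOn a (Set.Ici 0) := conv_sym_mono haconv hasym
  have hbmono : MonotoneOn b (Set.Ici 0) := conv_sym_mono hbconv hbsym
  -- continuity
  have hcont : ContinuousOn (fun x => b (gR x) - a x) (Set.Ico x₀ e) :=
    ((hbcont.comp_continuousOn hgc).sub hacont.continuousOn)
  refine ⟨hcont, ?_, ?_, ?_, ?_, ?_⟩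
  · -- antitone
    intro x hx y hy hxy
    have hax : a x ≤ a y := hamono (by exact le_trans hx₀.le hx.1) (le_trans hx₀.le hy.1) hxy
    have hby : b (gR y) ≤ b (gR x) := by
      rcases eq_or_lt_of_le hxy with rfl | hlt
      · exact le_rfl
      · have hg : gR y < gR x := hganti hx hy hlt
        have h1 : (0:ℝ) ≤ gR y := le_trans (le_trans hx₀.le hy.1) (hgid y hy).le
        exact hbmono h1 (le_trans h1 hg.le) hg.le
    simp only
    linarith
  · -- positivity at x₀
    have hx₀mem : x₀ ∈ Set.Ico x₀ e := ⟨le_refl _, hx₀e⟩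
    have hgx : x₀ < gR x₀ := hgid x₀ hx₀mem
    have ha0 : a 0 ≤ a x₀ := hamono (Set.mem_Ici.2 (le_refl 0)) hx₀.le hx₀.le
    by_contra h
    push_neg at h
    have hslope : (b (gR x₀) - a x₀) / (gR x₀ - x₀) ≤ 0 :=
      div_nonpos_of_nonpos_of_nonneg (by linarith) (by linarith)
    nlinarith
  · -- limit
    have h1 : Tendsto (fun x => b (gR x)) (nhdsWithin e (Set.Iio e)) (nhds (b e)) :=
      (hbcont.tendsto e).comp hglim
    have h2 : Tendsto a (nhdsWithin e (Set.Iio e)) (nhds (a e)) :=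
      (hacont.tendsto e).mono_left nhdsWithin_le_nhds
    exact h1.sub h2
  · linarith
  · -- existence
    have h1 : Tendsto (fun x => b (gR x)) (nhdsWithin e (Set.Iio e)) (nhds (b e)) :=
      (hbcont.tendsto e).comp hglim
    have h2 : Tendsto a (nhdsWithin e (Set.Iio e)) (nhds (a e)) :=
      (hacont.tendsto e).mono_left nhdsWithin_le_nhds
    have htend : Tendsto (fun x => b (gR x) - a x) (nhdsWithin e (Set.Iio e))
        (nhds (b e - a e)) := h1.sub h2
    have hev : ∀ᶠ x in nhdsWithin e (Set.Iio e), b (gR x) - a x < 0 :=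
      htend.eventually (tendsto_id.eventually_lt_const (by linarith)) |>.mono
        (fun x hx => hx)
    have hmem : Set.Ioo x₀ e ∈ nhdsWithin e (Set.Iio e) := by
      rw [mem_nhdsWithin]
      exact ⟨Set.Ioi x₀, isOpen_Ioi, hx₀e, fun x hx => ⟨hx.1, hx.2⟩⟩
    obtain ⟨y, hyneg, hymem⟩ := (hev.and (eventually_of_mem hmem (fun x hx => hx))).exists
    have hyIcc : Set.Icc x₀ y ⊆ Set.Ico x₀ e := fun z hz => ⟨hz.1, lt_of_le_of_lt hz.2 hymem.2⟩
    have hivt := intermediate_value_Icc' (le_of_lt hymem.1) (hcont.mono hyIcc)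
    have h0mem : (0:ℝ) ∈ Set.Icc (b (gR y) - a y) (b (gR x₀) - a x₀) := by
      constructor
      · linarith
      · -- need 0 ≤ b (gR x₀) - a x₀
        have hx₀mem : x₀ ∈ Set.Ico x₀ e := ⟨le_refl _, hx₀e⟩
        have hgx : x₀ < gR x₀ := hgid x₀ hx₀mem
        have ha0 : a 0 ≤ a x₀ := hamono (Set.mem_Ici.2 (le_refl 0)) hx₀.le hx₀.le
        by_contra h
        push_neg at h
        have hslope : (b (gR x₀) - a x₀) / (gR x₀ - x₀) ≤ 0 :=
          div_nonpos_of_nonpos_of_nonneg (by linarith) (by linarith)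
        nlinarith
    obtain ⟨c, hc, hc0⟩ := hivt h0mem
    refine ⟨c, ⟨?_, lt_of_le_of_lt hc.2 hymem.2⟩, hc0⟩
    rcases eq_or_lt_of_le hc.1 with rfl | h
    · -- c = x₀ impossible since value positive
      exfalso
      have hx₀mem : x₀ ∈ Set.Ico x₀ e := ⟨le_refl _, hx₀e⟩
      have hgx : x₀ < gR x₀ := hgid x₀ hx₀mem
      have ha0 : a 0 ≤ a x₀ := hamono (Set.mem_Ici.2 (le_refl 0)) hx₀.le hx₀.le
      simp only at hc0
      have hslope : (b (gR x₀) - a x₀) / (gR x₀ - x₀) ≤ 0 :=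
        div_nonpos_of_nonpos_of_nonneg (by linarith) (by linarith)
      nlinarith
    · exact h
end

section
/- Let ν be a probability measure on ℝ with mean m, continuous on its support interval, and let b : ℝ → ℝ be convex and ν-integrable. Suppose f < m < g satisfy ∫_{(f,g)} (y − m) ν(dy) = 0, and let L be the affine function through (f, b(f)) and (g, b(g)). If a(m) := L(m) and ψ = max(b, L), then ∫ ψ dν = ∫_{(f,g)^c} b dν + a(m)·ν((f,g)), and moreover ∫ ψ dν ≥ max(a(m), ∫ b dν), with strict inequality when b is not affine on (f,g) and ν((f,g)) ∈ (0,1). -/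
open MeasureTheory Set

private lemma chord_le {b : ℝ → ℝ} (hb : ConvexOn ℝ Set.univ b) {f g x : ℝ}
    (hfg : f < g) (hfx : f ≤ x) (hxg : x ≤ g) :
    b x ≤ b f + (b g - b f) / (g - f) * (x - f) := by
  have hgf : (0:ℝ) < g - f := by linarith
  rcases eq_or_lt_of_le hfx with rfl | hfx
  · simp
  rcases eq_or_lt_of_le hxg with rfl | hxg
  · rw [div_mul_cancel₀ _ (sub_ne_zero.2 (ne_of_gt hfx))]; linarith
  have h := hb.slope_mono_adjacent (Set.mem_univ f) (Set.mem_univ g) hfx hxg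
  rw [div_le_div_iff₀ (by linarith) (by linarith)] at h
  rw [← sub_le_iff_le_add', div_mul_eq_mul_div, le_div_iff₀ hgf]
  nlinarith [h]

private lemma chord_ge_right {b : ℝ → ℝ} (hb : ConvexOn ℝ Set.univ b) {f g x : ℝ}
    (hfg : f < g) (hgx : g ≤ x) :
    b f + (b g - b f) / (g - f) * (x - f) ≤ b x := by
  have hgf : (0:ℝ) < g - f := by linarith
  rcases eq_or_lt_of_le hgx with rfl | hgx
  · rw [div_mul_cancel₀ _ (ne_of_gt hgf)]; linarith
  have h := hb.slope_mono_adjacent (Set.mem_univ f) (Set.mem_univ x) hfg hgx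
  rw [div_le_div_iff₀ (by linarith) (by linarith)] at h
  rw [← le_sub_iff_add_le', div_mul_eq_mul_div, div_le_iff₀ hgf]
  nlinarith [h]

private lemma chord_ge_left {b : ℝ → ℝ} (hb : ConvexOn ℝ Set.univ b) {f g x : ℝ}
    (hfg : f < g) (hxf : x ≤ f) :
    b f + (b g - b f) / (g - f) * (x - f) ≤ b x := by
  have hgf : (0:ℝ) < g - f := by linarith
  rcases eq_or_lt_of_le hxf with rfl | hxf
  · simp
  have h := hb.slope_mono_adjacent (Set.mem_univ x) (Set.mem_univ g) hxf (by linarith)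
  rw [div_le_div_iff₀ (by linarith) (by linarith)] at h
  rw [← le_sub_iff_add_le', div_mul_eq_mul_div, div_le_iff₀ hgf]
  nlinarith [h]

private lemma chord_gt_right {b : ℝ → ℝ} (hb : ConvexOn ℝ Set.univ b) {f g x x0 : ℝ}
    (hfg : f < g) (hfx0 : f < x0) (hx0g : x0 < g)
    (hlt : b x0 < b f + (b g - b f) / (g - f) * (x0 - f)) (hgx : g < x) :
    b f + (b g - b f) / (g - f) * (x - f) < b x := by
  have hgf : (0:ℝ) < g - f := by linarith
  have hgx0 : (0:ℝ) < g - x0 := by linarith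
  set s : ℝ := (b g - b f) / (g - f) with hsdef
  have hs : s * (g - f) = b g - b f := div_mul_cancel₀ _ (by linarith)
  set s' : ℝ := (b g - b x0) / (g - x0) with hs'def
  have hs'mul : s' * (g - x0) = b g - b x0 := div_mul_cancel₀ _ (by linarith)
  have hss' : s < s' := by
    rw [hs'def, lt_div_iff₀ hgx0]
    nlinarith [hlt, hs]
  have h1 : b x0 + (b g - b x0) / (g - x0) * (x - x0) ≤ b x :=
    chord_ge_right hb hx0g hgx.le
  have h2 : b f + s * (x - f) < b x0 + s' * (x - x0) := by
    have e1 : b f + s * (x - f) = b g + s * (x - g) := by linear_combination hs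
    have e2 : b x0 + s' * (x - x0) = b g + s' * (x - g) := by linear_combination hs'mul
    rw [e1, e2]
    have := mul_lt_mul_of_pos_right hss' (show (0:ℝ) < x - g by linarith)
    linarith
  calc b f + s * (x - f) < b x0 + s' * (x - x0) := h2
    _ ≤ b x := h1

private lemma chord_gt_left {b : ℝ → ℝ} (hb : ConvexOn ℝ Set.univ b) {f g x x0 : ℝ}
    (hfg : f < g) (hfx0 : f < x0) (hx0g : x0 < g)
    (hlt : b x0 < b f + (b g - b f) / (g - f) * (x0 - f)) (hxf : x < f) :
    b f + (b g - b f) / (g - f) * (x - f) < b x := by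
  have hx0f : (0:ℝ) < x0 - f := by linarith
  set s : ℝ := (b g - b f) / (g - f) with hsdef
  set s'' : ℝ := (b x0 - b f) / (x0 - f) with hs''def
  have hs''mul : s'' * (x0 - f) = b x0 - b f := div_mul_cancel₀ _ (by linarith)
  have hss : s'' < s := by
    rw [hs''def, div_lt_iff₀ hx0f]
    nlinarith [hlt]
  have h1 : b f + (b x0 - b f) / (x0 - f) * (x - f) ≤ b x :=
    chord_ge_left hb hfx0 hxf.le
  have h2 : b f + s * (x - f) < b f + s'' * (x - f) := by
    have := mul_lt_mul_of_pos_right hss (show (0:ℝ) < f - x by linarith)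
    nlinarith [this]
  calc b f + s * (x - f) < b f + s'' * (x - f) := h2
    _ ≤ b x := h1
theorem time_zero_exercise (ν : Measure ℝ) [IsProbabilityMeasure ν]
    (βl βr m f g : ℝ) (hβ : βl < βr)
    (hνsupp : ν (Set.Ioo βl βr) = 1)
    (hνpos : ∀ u v : ℝ, βl ≤ u → u < v → v ≤ βr → 0 < ν (Set.Ioo u v))
    (hatomless : ∀ x : ℝ, ν {x} = 0)
    (hβlf : βl < f) (hfm : f < m) (hmg : m < g) (hgβr : g < βr)
    (hidint : Integrable (fun x : ℝ => x) ν)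
    (hmean : (∫ x, x ∂ν) = m)
    (b : ℝ → ℝ) (hb : ConvexOn ℝ Set.univ b) (hbint : Integrable b ν)
    (hcent : (∫ x in Set.Ioo f g, (x - m) ∂ν) = 0) :
    let L : ℝ → ℝ := fun x => b f + ((b g - b f) / (g - f)) * (x - f)
    let ψ : ℝ → ℝ := fun x => max (b x) (L x)
    ((∫ x, ψ x ∂ν)
        = (∫ x in (Set.Ioo f g)ᶜ, b x ∂ν) + L m * (ν (Set.Ioo f g)).toReal) ∧
    max (L m) (∫ x, b x ∂ν) ≤ (∫ x, ψ x ∂ν) ∧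
    ((¬ ∃ c d : ℝ, ∀ x ∈ Set.Ioo f g, b x = c + d * x) →
      0 < ν (Set.Ioo f g) → ν (Set.Ioo f g) < 1 →
      max (L m) (∫ x, b x ∂ν) < ∫ x, ψ x ∂ν) := by
  intro L ψ
  have hfg : f < g := hfm.trans hmg
  set S : Set ℝ := Set.Ioo f g with hSdef
  have hS : MeasurableSet S := measurableSet_Ioo
  -- Integrability
  have hLint : Integrable L ν := by
    have h : Integrable (fun x : ℝ => x - f) ν := hidint.sub (integrable_const f)
    exact (integrable_const (b f)).add (h.const_mul ((b g - b f) / (g - f)))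
  have hψint : Integrable ψ ν := hbint.sup hLint
  -- ψ = L on S, ψ = b on Sᶜ
  have hψS : ∀ x ∈ S, ψ x = L x := fun x hx =>
    max_eq_right (chord_le hb hfg hx.1.le hx.2.le)
  have hLleb : ∀ x ∈ Sᶜ, L x ≤ b x := by
    intro x hx
    rcases le_or_gt x f with h | h
    · exact chord_ge_left hb hfg h
    · rcases le_or_gt g x with h' | h'
      · exact chord_ge_right hb hfg h'
      · exact absurd ⟨h, h'⟩ hx
  have hψSc : ∀ x ∈ Sᶜ, ψ x = b x := fun x hx => max_eq_left (hLleb x hx)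
  -- L is affine around m
  have hLm : ∀ x : ℝ, L x = L m + ((b g - b f) / (g - f)) * (x - m) := by
    intro x
    show b f + ((b g - b f) / (g - f)) * (x - f)
      = (b f + ((b g - b f) / (g - f)) * (m - f)) + ((b g - b f) / (g - f)) * (x - m)
    ring
  have hi2 : Integrable (fun x : ℝ => ((b g - b f) / (g - f)) * (x - m)) ν :=
    (hidint.sub (integrable_const m)).const_mul _
  have hsubm : (∫ x, (x - m) ∂ν) = 0 := by
    have h : (∫ x, (x - m) ∂ν) = (∫ x, x ∂ν) - ∫ _, m ∂ν :=
      integral_sub hidint (integrable_const m)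
    rw [h, hmean, integral_const]
    simp
  -- ∫_S L = L m * ν S
  have hintSL : (∫ x in S, L x ∂ν) = L m * (ν S).toReal := by
    have h1 : (∫ x in S, L x ∂ν)
        = ∫ x in S, (L m + ((b g - b f) / (g - f)) * (x - m)) ∂ν :=
      setIntegral_congr_fun hS fun x _ => hLm x
    rw [h1, integral_add ((integrable_const _).integrableOn) hi2.integrableOn,
      setIntegral_const, integral_const_mul, hcent]
    simp [mul_comm, Measure.real]
  -- ∫ L = L m
  have hintL : (∫ x, L x ∂ν) = L m := by
    have h1 : (∫ x, L x ∂ν) = ∫ x, (L m + ((b g - b f) / (g - f)) * (x - m)) ∂ν := by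
      congr 1; ext x; exact hLm x
    rw [h1, integral_add (integrable_const _) hi2, integral_const, integral_const_mul, hsubm]
    simp
  -- splitting of ∫ ψ
  have hsplit : (∫ x, ψ x ∂ν)
      = (∫ x in Sᶜ, b x ∂ν) + L m * (ν S).toReal := by
    rw [← integral_add_compl hS hψint,
      setIntegral_congr_fun hS hψS, setIntegral_congr_fun hS.compl hψSc,
      hintSL, add_comm]
  refine ⟨hsplit, ?_, ?_⟩
  · refine max_le ?_ ?_
    · rw [← hintL]; exact integral_mono hLint hψint fun x => le_max_right _ _
    · exact integral_mono hbint hψint fun x => le_max_left _ _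
  · -- strict inequality
    intro hne hpos hlt1
    have hx0 : ∃ x0 ∈ S, b x0 < L x0 := by
      by_contra hcon
      push_neg at hcon
      refine hne ⟨b f - ((b g - b f) / (g - f)) * f, (b g - b f) / (g - f), fun x hx => ?_⟩
      have h1 := chord_le hb hfg hx.1.le hx.2.le
      have h2 := hcon x hx
      have h3 : b x = L x := le_antisymm h1 h2
      rw [h3]
      show b f + ((b g - b f) / (g - f)) * (x - f)
        = b f - ((b g - b f) / (g - f)) * f + ((b g - b f) / (g - f)) * x
      ring
    obtain ⟨x0, hx0S, hx0lt⟩ := hx0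
    have hbcont : Continuous b := by
      rw [← continuousOn_univ]
      exact hb.continuousOn isOpen_univ
    have hLcont : Continuous L := by
      change Continuous fun x : ℝ => b f + ((b g - b f) / (g - f)) * (x - f)
      fun_prop
    -- (A) ∫ b < ∫ ψ
    have hA : (∫ x, b x ∂ν) < ∫ x, ψ x ∂ν := by
      have hbsplit : (∫ x, b x ∂ν) = (∫ x in S, b x ∂ν) + (∫ x in Sᶜ, b x ∂ν) :=
        (integral_add_compl hS hbint).symm
      have hψsplit : (∫ x, ψ x ∂ν) = (∫ x in S, L x ∂ν) + (∫ x in Sᶜ, b x ∂ν) := by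
        rw [← integral_add_compl hS hψint,
          setIntegral_congr_fun hS hψS, setIntegral_congr_fun hS.compl hψSc]
      rw [hbsplit, hψsplit]
      have hdiffpos : 0 < ∫ x in S, (L x - b x) ∂ν := by
        rw [setIntegral_pos_iff_support_of_nonneg_ae]
        · have hopen : IsOpen {x : ℝ | 0 < L x - b x} :=
            isOpen_lt continuous_const (hLcont.sub hbcont)
          obtain ⟨ε, hε, hball⟩ := Metric.isOpen_iff.mp hopen x0 (by simpa using hx0lt)
          rw [Real.ball_eq_Ioo] at hball
          have huv1 : max f (x0 - ε) < x0 := max_lt hx0S.1 (by linarith)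
          have huv2 : x0 < min g (x0 + ε) := lt_min hx0S.2 (by linarith)
          have hsub : Set.Ioo (max f (x0 - ε)) (min g (x0 + ε))
              ⊆ Function.support (fun x => L x - b x) ∩ S := by
            intro x hx
            have hx1 : x ∈ Set.Ioo (x0 - ε) (x0 + ε) :=
              ⟨lt_of_le_of_lt (le_max_right _ _) hx.1, lt_of_lt_of_le hx.2 (min_le_right _ _)⟩
            have hx2 : x ∈ S :=
              ⟨lt_of_le_of_lt (le_max_left _ _) hx.1, lt_of_lt_of_le hx.2 (min_le_left _ _)⟩
            exact ⟨ne_of_gt (hball hx1), hx2⟩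
          calc (0 : ENNReal)
              < ν (Set.Ioo (max f (x0 - ε)) (min g (x0 + ε))) :=
                hνpos _ _ (le_trans hβlf.le (le_max_left _ _)) (huv1.trans huv2)
                  (le_trans (min_le_left _ _) hgβr.le)
            _ ≤ _ := measure_mono hsub
        · exact (ae_restrict_iff' hS).mpr (Filter.Eventually.of_forall fun x hx =>
            sub_nonneg.2 (chord_le hb hfg hx.1.le hx.2.le))
        · exact (hLint.sub hbint).integrableOn
      have hsub2 := integral_sub (hLint.integrableOn (s := S) (μ := ν))
        (hbint.integrableOn (s := S) (μ := ν))
      linarith [hdiffpos, hsub2]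
    -- (B) L m < ∫ ψ
    have hB : L m < ∫ x, ψ x ∂ν := by
      have hLsplit : (∫ x, L x ∂ν) = (∫ x in S, L x ∂ν) + (∫ x in Sᶜ, L x ∂ν) :=
        (integral_add_compl hS hLint).symm
      have hψsplit : (∫ x, ψ x ∂ν) = (∫ x in S, L x ∂ν) + (∫ x in Sᶜ, b x ∂ν) := by
        rw [← integral_add_compl hS hψint,
          setIntegral_congr_fun hS hψS, setIntegral_congr_fun hS.compl hψSc]
      have hdiffpos : 0 < ∫ x in Sᶜ, (b x - L x) ∂ν := by
        rw [setIntegral_pos_iff_support_of_nonneg_ae]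
        · set T : Set ℝ := (Set.Ioo βl βr ∩ Sᶜ) \ {f, g} with hT
          have hTsub : T ⊆ Function.support (fun x => b x - L x) ∩ Sᶜ := by
            intro x hx
            obtain ⟨⟨hxβ, hxSc⟩, hxfg⟩ := hx
            refine ⟨?_, hxSc⟩
            have hxne : x ≠ f ∧ x ≠ g := by
              simp only [Set.mem_insert_iff, Set.mem_singleton_iff] at hxfg
              push_neg at hxfg; exact hxfg
            rcases lt_or_ge x f with h | h
            · exact ne_of_gt (sub_pos.2 (chord_gt_left hb hfg hx0S.1 hx0S.2 hx0lt h))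
            have hxg : g < x := by
              rcases lt_or_ge x g with h' | h'
              · rcases eq_or_lt_of_le h with rfl | h2
                · exact absurd rfl hxne.1
                · exact absurd ⟨h2, h'⟩ hxSc
              · rcases eq_or_lt_of_le h' with rfl | h2
                · exact absurd rfl hxne.2.symm
                · exact h2
            exact ne_of_gt (sub_pos.2 (chord_gt_right hb hfg hx0S.1 hx0S.2 hx0lt hxg))
          have hνT : 0 < ν T := by
            have h1 : ν Sᶜ = 1 - ν S := prob_compl_eq_one_sub hS
            have h2 : 0 < ν Sᶜ := by rw [h1]; exact tsub_pos_iff_lt.mpr hlt1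
            have h3 : ν ((Set.Ioo βl βr)ᶜ) = 0 := by
              rw [prob_compl_eq_one_sub (measurableSet_Ioo (a := βl) (b := βr)), hνsupp]
              simp
            have h4 : 0 < ν (Set.Ioo βl βr ∩ Sᶜ) := by
              by_contra hcon
              push_neg at hcon
              have h5 : ν Sᶜ ≤ ν (Set.Ioo βl βr ∩ Sᶜ) + ν ((Set.Ioo βl βr)ᶜ) := by
                refine le_trans (measure_mono ?_) (measure_union_le _ _)
                intro x hx
                by_cases hxb : x ∈ Set.Ioo βl βr
                · exact Or.inl ⟨hxb, hx⟩
                · exact Or.inr hxb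
              rw [h3, add_zero] at h5
              exact absurd (le_trans h5 hcon) (not_le.mpr h2)
            have h6 : ν ({f, g} : Set ℝ) = 0 := by
              have h7 : ν ({f, g} : Set ℝ) ≤ ν {f} + ν {g} := measure_union_le _ _
              rw [hatomless f, hatomless g, add_zero] at h7
              exact le_antisymm h7 zero_le
            rw [hT, measure_diff_null h6]
            exact h4
          exact lt_of_lt_of_le hνT (measure_mono hTsub)
        · exact (ae_restrict_iff' hS.compl).mpr (Filter.Eventually.of_forall fun x hx =>
            sub_nonneg.2 (hLleb x hx))
        · exact (hbint.sub hLint).integrableOn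
      have hsub2 := integral_sub (hbint.integrableOn (s := Sᶜ) (μ := ν))
        (hLint.integrableOn (s := Sᶜ) (μ := ν))
      rw [← hintL, hLsplit, hψsplit]
      linarith [hdiffpos, hsub2]
    exact max_lt hB hA
end

section
/- Let χ and ξ be finite measures on ℝ with equal total mass and equal mean, such that χ is concentrated on (−γ, γ) and ξ on (−∞, −γ] ∪ [γ, ∞) for some γ > 0. Then χ ≤_cx ξ, i.e., ∫ f dχ ≤ ∫ f dξ for every convex f : ℝ → ℝ (for which both integrals exist). -/
open MeasureTheory Set

theorem convex_order_of_separated_masses (γ : ℝ) (hγ : 0 < γ)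
    (χ ξ : Measure ℝ) [IsFiniteMeasure χ] [IsFiniteMeasure ξ]
    (hmass : χ Set.univ = ξ Set.univ)
    (hidχ : Integrable (fun x : ℝ => x) χ) (hidξ : Integrable (fun x : ℝ => x) ξ)
    (hmean : (∫ x, x ∂χ) = ∫ x, x ∂ξ)
    (hχsupp : χ (Set.Ioo (-γ) γ)ᶜ = 0)
    (hξsupp : ξ (Set.Ioo (-γ) γ) = 0) :
    ∀ f : ℝ → ℝ, ConvexOn ℝ Set.univ f → Integrable f χ → Integrable f ξ →
      (∫ x, f x ∂χ) ≤ ∫ x, f x ∂ξ := by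
  intro f hf hfχ hfξ
  set a : ℝ := (f γ - f (-γ)) / (2 * γ) with ha
  set b : ℝ := (f γ + f (-γ)) / 2 with hb
  set l : ℝ → ℝ := fun x => a * x + b with hl
  have hγ2 : (0:ℝ) < 2 * γ := by linarith
  -- inside the interval: f ≤ l
  have hin : ∀ x ∈ Set.Ioo (-γ) γ, f x ≤ l x := by
    intro x hx
    obtain ⟨hx1, hx2⟩ := hx
    have ht0 : 0 ≤ (γ - x) / (2 * γ) := by
      apply div_nonneg _ hγ2.le; linarith
    have hs0 : 0 ≤ (x + γ) / (2 * γ) := by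
      apply div_nonneg _ hγ2.le; linarith
    have hts : (γ - x) / (2 * γ) + (x + γ) / (2 * γ) = 1 := by
      field_simp; ring
    have := hf.2 (Set.mem_univ (-γ)) (Set.mem_univ γ) ht0 hs0 hts
    have hxeq : ((γ - x) / (2 * γ)) • (-γ) + ((x + γ) / (2 * γ)) • γ = x := by
      rw [smul_eq_mul, smul_eq_mul, div_mul_eq_mul_div, div_mul_eq_mul_div, ← add_div, div_eq_iff hγ2.ne']; ring
    rw [hxeq] at this
    refine this.trans_eq ?_
    simp only [smul_eq_mul, hl, ha, hb]
    field_simp; ring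
  -- outside the interval: l ≤ f
  have klg : a * γ + b = f γ := by rw [ha, hb]; field_simp; ring
  have kmg : a * (-γ) + b = f (-γ) := by rw [ha, hb]; field_simp; ring
  have hout : ∀ x ∈ (Set.Ioo (-γ) γ)ᶜ, l x ≤ f x := by
    intro x hx
    simp only [Set.mem_compl_iff, Set.mem_Ioo, not_and_or, not_lt] at hx
    show a * x + b ≤ f x
    rcases hx with hx | hx
    · rcases eq_or_lt_of_le hx with h | h
      · rw [← h] at kmg; exact kmg.le
      · have hs := hf.slope_mono_adjacent (Set.mem_univ x) (Set.mem_univ γ)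
          h (by linarith : -γ < γ)
        rw [div_le_div_iff₀ (by linarith : (0:ℝ) < -γ - x) (by linarith : (0:ℝ) < γ - -γ)] at hs
        nlinarith [hs, klg, kmg, hγ2]
    · rcases eq_or_lt_of_le hx with h | h
      · rw [h] at klg; exact klg.le
      · have hs := hf.slope_mono_adjacent (Set.mem_univ (-γ)) (Set.mem_univ x)
          (by linarith : -γ < γ) h
        rw [div_le_div_iff₀ (by linarith : (0:ℝ) < γ - -γ) (by linarith : (0:ℝ) < x - γ)] at hs
        nlinarith [hs, klg, kmg, hγ2]
  have hlχ : Integrable l χ := (hidχ.const_mul a).add (integrable_const b)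
  have hlξ : Integrable l ξ := (hidξ.const_mul a).add (integrable_const b)
  have haeχ : ∀ᵐ x ∂χ, x ∈ Set.Ioo (-γ) γ := by
    rw [ae_iff]
    refine measure_mono_null ?_ hχsupp
    intro x hx; exact hx
  have haeξ : ∀ᵐ x ∂ξ, x ∈ (Set.Ioo (-γ) γ)ᶜ := by
    rw [ae_iff]
    refine measure_mono_null ?_ hξsupp
    intro x hx; simpa using hx
  have step1 : (∫ x, f x ∂χ) ≤ ∫ x, l x ∂χ :=
    integral_mono_ae hfχ hlχ (haeχ.mono fun x hx => hin x hx)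
  have step3 : (∫ x, l x ∂ξ) ≤ ∫ x, f x ∂ξ :=
    integral_mono_ae hlξ hfξ (haeξ.mono fun x hx => hout x hx)
  have step2 : (∫ x, l x ∂χ) = ∫ x, l x ∂ξ := by
    have h1 : (∫ x, l x ∂χ) = a * (∫ x, x ∂χ) + (χ Set.univ).toReal * b := by
      rw [hl, integral_add (hidχ.const_mul a) (integrable_const b),
        integral_const_mul, integral_const, smul_eq_mul]; rfl
    have h2 : (∫ x, l x ∂ξ) = a * (∫ x, x ∂ξ) + (ξ Set.univ).toReal * b := by
      rw [hl, integral_add (hidξ.const_mul a) (integrable_const b),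
        integral_const_mul, integral_const, smul_eq_mul]; rfl
    rw [h1, h2, hmean, hmass]
  linarith
end
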